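/- arXiv:2202.06405 — 5 statements merged into one kernel-verified Lean document; each statement's English description precedes it below -/
import Mathlib

section
/- Let f₁,…,fₙ : ℂ → ℂ be such that every consecutive-tail discrete Wronskian Wr(fₙ,…,fᵢ) is nonzero. Then the unique monic difference operator S of order n annihilating f₁,…,fₙ factors as S = (T − g₁(x+1)/g₁(x)) ∘ ⋯ ∘ (T − gₙ(x+1)/gₙ(x)), where gₙ = fₙ and gᵢ = Wr(fₙ, fₙ₋₁,…,fᵢ)/Wr(fₙ,…,fᵢ₊₁) for i = 1,…,n−1. -/
/-!
Both sides are monic difference operators of order `n` annihilating `f`. For any such operator `L`,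
adding to the last column of the Wronskian matrix of `(h, f)` the combination of the other columns
given by the coefficients of `L` turns that column into `(L h, 0, …, 0)`, so
`Wr(h, f) = (-1)ⁿ Wr(f) · L h` and `L` is determined by `f`. That the factored operator annihilates
`f` goes by induction on `n`: the inner factors annihilate the tail of `f` and hence send `f 0` to
`(-1)ⁿ⁻¹ Wr(f) / Wr(tail f)`, a multiple of the function `g` of the outer factor `T - g(x+1)/g(x)`.
-/

/-- Discrete Wronskian of a list of functions. -/
noncomputable def dWrL (L : List (ℂ → ℂ)) (x : ℂ) : ℂ :=
  Matrix.det (Matrix.of fun i j : Fin L.length => L.get i (x + (j : ℕ)))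

/-- Application of the first-order difference operator `T - r(x)` to `g`. -/
def factorApply (r : ℂ → ℂ) (g : ℂ → ℂ) : ℂ → ℂ :=
  fun x => g (x + 1) - r x * g x

/-- A monic difference operator of order `n`, `S = Tⁿ + ∑ⱼ aⱼ(x) T^(n-j)`, applied to `g`. -/
noncomputable def diffOpApply {n : ℕ} (a : Fin n → ℂ → ℂ) (g : ℂ → ℂ) (x : ℂ) : ℂ :=
  g (x + n) + ∑ j : Fin n, a j x * g (x + ((n - (j.val + 1) : ℕ) : ℂ))

noncomputable def dWr {m : ℕ} (u : Fin m → ℂ → ℂ) (x : ℂ) : ℂ :=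
  Matrix.det (Matrix.of fun i j : Fin m => u i (x + (j : ℕ)))

theorem dWrL_ofFn {m : ℕ} (u : Fin m → ℂ → ℂ) : dWrL (List.ofFn u) = dWr u := by
  funext x
  rw [dWrL, dWr, ← Matrix.det_reindex_self (finCongr (List.length_ofFn (f := u)))]
  congr 1
  ext i j
  simp

noncomputable def monicDiffOp {m : ℕ} (c : Fin m → ℂ → ℂ) (h : ℂ → ℂ) (x : ℂ) : ℂ :=
  h (x + m) + ∑ k : Fin m, c k x * h (x + (k : ℕ))

theorem monicDiffOp_eq_sum_snoc {m : ℕ} (c : Fin m → ℂ → ℂ) (h : ℂ → ℂ) (x : ℂ) :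
    monicDiffOp c h x =
      ∑ k : Fin (m + 1), Fin.snoc (α := fun _ => ℂ) (fun k => c k x) 1 k * h (x + (k : ℕ)) := by
  simp [monicDiffOp, Fin.sum_univ_castSucc, add_comm]

theorem diffOpApply_eq_monicDiffOp {n : ℕ} (a : Fin n → ℂ → ℂ) :
    diffOpApply a = monicDiffOp fun k => a k.rev := by
  funext g y
  refine congrArg _ (Fintype.sum_equiv Fin.revPerm _ _ fun j => ?_)
  simp only [Fin.revPerm_apply, Fin.rev_rev, Fin.val_rev]

theorem factorApply_monicDiffOp {m : ℕ} (r : ℂ → ℂ) (c : Fin m → ℂ → ℂ) (h : ℂ → ℂ) :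
    factorApply r (monicDiffOp c h) = monicDiffOp (fun j y =>
      Fin.cons (α := fun _ => ℂ) 0 (fun k => c k (y + 1)) j
        - r y * Fin.snoc (α := fun _ => ℂ) (fun k => c k y) 1 j) h := by
  funext x
  have hcons : ∑ j : Fin (m + 1), Fin.cons (α := fun _ => ℂ) 0 (fun k => c k (x + 1)) j
      * h (x + (j : ℕ)) = ∑ k : Fin m, c k (x + 1) * h (x + 1 + (k : ℕ)) := by
    simp [Fin.sum_univ_succ, add_comm, add_left_comm]
  calc factorApply r (monicDiffOp c h) x = monicDiffOp c h (x + 1) - r x * monicDiffOp c h x := rfl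
    _ = h (x + (m + 1 : ℕ)) + ∑ k : Fin m, c k (x + 1) * h (x + 1 + (k : ℕ))
          - r x * ∑ k : Fin (m + 1), Fin.snoc (α := fun _ => ℂ) (fun k => c k x) 1 k
            * h (x + (k : ℕ)) := by
      rw [monicDiffOp_eq_sum_snoc c h x, monicDiffOp]
      push_cast
      ring_nf
    _ = _ := by
      rw [monicDiffOp, ← hcons, Finset.mul_sum, add_sub_assoc, ← Finset.sum_sub_distrib]
      simp only [sub_mul, mul_assoc]

theorem exists_foldr_factorApply_eq_monicDiffOp {m : ℕ} (r : Fin m → ℂ → ℂ) :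
    ∃ c : Fin m → ℂ → ℂ, ∀ h, (List.ofFn r).foldr factorApply h = monicDiffOp c h := by
  induction m with
  | zero => exact ⟨Fin.elim0, fun h => by funext x; simp [monicDiffOp]⟩
  | succ m ih =>
    obtain ⟨c, hc⟩ := ih (Fin.tail r)
    exact ⟨_, fun h => by rw [List.ofFn_succ, List.foldr_cons, ← Fin.tail_def, hc,
      factorApply_monicDiffOp]⟩

theorem dWr_cons_eq_of_monicDiffOp_eq_zero {m : ℕ} (u : Fin m → ℂ → ℂ) (c : Fin m → ℂ → ℂ)
    (v : ℂ → ℂ) (x : ℂ) (hc : ∀ i, monicDiffOp c (u i) x = 0) :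
    dWr (Fin.cons v u) x = (-1) ^ m * dWr u x * monicDiffOp c v x := by
  set M : Matrix (Fin (m + 1)) (Fin (m + 1)) ℂ :=
    Matrix.of fun i j => (Fin.cons v u : Fin (m + 1) → ℂ → ℂ) i (x + (j : ℕ))
  -- adding `c`-multiples of the other columns to the last one applies the operator to each row
  set N := M.updateCol (Fin.last m)
    fun k => ∑ i, Fin.snoc (α := fun _ => ℂ) (fun k => c k x) 1 i • M k i
  have hNM : N.det = M.det := by
    have := Matrix.det_updateCol_sum M (Fin.last m) (Fin.snoc (α := fun _ => ℂ) (fun k => c k x) 1)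
    rwa [Fin.snoc_last, one_smul] at this
  have hN_last : ∀ k, N k (Fin.last m) =
      monicDiffOp c ((Fin.cons v u : Fin (m + 1) → ℂ → ℂ) k) x := fun k => by
    simp [N, M, monicDiffOp_eq_sum_snoc]
  have hN_minor : N.submatrix Fin.succ Fin.castSucc =
      Matrix.of fun i j : Fin m => u i (x + (j : ℕ)) := by
    ext i j
    simp [N, M]
  change M.det = _
  rw [← hNM, Matrix.det_succ_column _ (Fin.last m), Fin.sum_univ_succ,
    Finset.sum_eq_zero fun i _ => by rw [hN_last, Fin.cons_succ, hc, mul_zero, zero_mul],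
    add_zero, hN_last, Fin.cons_zero, Fin.succAbove_zero, Fin.succAbove_last, hN_minor]
  simp only [Fin.val_zero, Fin.val_last, zero_add, dWr]
  ring

theorem monicDiffOp_eq_dWr_cons_div {m : ℕ} {u : Fin m → ℂ → ℂ} {c : Fin m → ℂ → ℂ} {x : ℂ}
    (hu : dWr u x ≠ 0) (hc : ∀ i, monicDiffOp c (u i) x = 0) (v : ℂ → ℂ) :
    monicDiffOp c v x = (-1) ^ m * dWr (Fin.cons v u) x / dWr u x := by
  rw [dWr_cons_eq_of_monicDiffOp_eq_zero u c v x hc]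
  field_simp
  rw [← pow_mul, pow_mul', neg_one_sq, one_pow, mul_one]

theorem factorApply_div_self {g : ℂ → ℂ} {x : ℂ} (hg : g x ≠ 0) (c : ℂ) :
    factorApply (fun y => g (y + 1) / g y) (fun y => c * g y) x = 0 := by
  simp only [factorApply]
  field_simp
  ring

noncomputable def tailWrRatio {n : ℕ} (f : Fin n → ℂ → ℂ) (i : ℕ) (y : ℂ) : ℂ :=
  dWrL ((List.ofFn f).drop i) y / dWrL ((List.ofFn f).drop (i + 1)) y

theorem tailWrRatio_zero {m : ℕ} (f : Fin (m + 1) → ℂ → ℂ) :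
    tailWrRatio f 0 = fun y => dWr f y / dWr (Fin.tail f) y := by
  funext y
  rw [tailWrRatio, List.drop_zero, dWrL_ofFn, List.ofFn_succ, List.drop_one, List.tail_cons,
    dWrL_ofFn]
  rfl

theorem tailWrRatio_succ {m : ℕ} (f : Fin (m + 1) → ℂ → ℂ) (i : ℕ) :
    tailWrRatio f (i + 1) = tailWrRatio (Fin.tail f) i := by
  funext y
  rw [tailWrRatio, tailWrRatio, List.ofFn_succ, List.drop_succ_cons, List.drop_succ_cons]
  rfl

theorem dWrL_drop_tail_ne_zero {m : ℕ} {f : Fin (m + 1) → ℂ → ℂ}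
    (hW : ∀ i ≤ m + 1, ∀ x, dWrL ((List.ofFn f).drop i) x ≠ 0) :
    ∀ i ≤ m, ∀ x, dWrL ((List.ofFn (Fin.tail f)).drop i) x ≠ 0 := fun i hi x => by
  have := hW (i + 1) (by omega) x
  rwa [List.ofFn_succ, List.drop_succ_cons] at this

noncomputable def wronskianFactors {n : ℕ} (f : Fin n → ℂ → ℂ) : List (ℂ → ℂ) :=
  List.ofFn fun i : Fin n => fun y => tailWrRatio f i (y + 1) / tailWrRatio f i y

theorem wronskianFactors_succ {m : ℕ} (f : Fin (m + 1) → ℂ → ℂ) :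
    wronskianFactors f =
      (fun y => tailWrRatio f 0 (y + 1) / tailWrRatio f 0 y) :: wronskianFactors (Fin.tail f) := by
  simp only [wronskianFactors, List.ofFn_succ, Fin.val_succ, tailWrRatio_succ, Fin.val_zero]

theorem foldr_wronskianFactors_apply_eq_zero {n : ℕ} (f : Fin n → ℂ → ℂ)
    (hW : ∀ i ≤ n, ∀ x, dWrL ((List.ofFn f).drop i) x ≠ 0) (i : Fin n) (x : ℂ) :
    (wronskianFactors f).foldr factorApply (f i) x = 0 := by
  induction n generalizing x with
  | zero => exact i.elim0
  | succ m ih =>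
    have hW' := dWrL_drop_tail_ne_zero hW
    obtain ⟨c, hc⟩ : ∃ c : Fin m → ℂ → ℂ,
        ∀ h, (wronskianFactors (Fin.tail f)).foldr factorApply h = monicDiffOp c h :=
      exists_foldr_factorApply_eq_monicDiffOp _
    rw [wronskianFactors_succ, List.foldr_cons]
    induction i using Fin.cases with
    | zero =>
      have hu : ∀ y, dWr (Fin.tail f) y ≠ 0 := by simpa only [List.drop_zero, dWrL_ofFn] using hW' 0 m.zero_le
      have hF : (wronskianFactors (Fin.tail f)).foldr factorApply (f 0) =
          fun y => (-1) ^ m * tailWrRatio f 0 y := by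
        funext y
        rw [hc, monicDiffOp_eq_dWr_cons_div (hu y) (fun j => by rw [← hc]; exact ih _ hW' j y),
          Fin.cons_self_tail, tailWrRatio_zero, mul_div_assoc]
      have hg : tailWrRatio f 0 x ≠ 0 := by
        rw [tailWrRatio_zero]
        refine div_ne_zero ?_ (hu x)
        simpa only [List.drop_zero, dWrL_ofFn] using hW 0 (m + 1).zero_le x
      rw [hF]
      exact factorApply_div_self hg _
    | succ j =>
      have hF : ∀ y, (wronskianFactors (Fin.tail f)).foldr factorApply (f j.succ) y = 0 :=
        ih _ hW' j
      simp only [factorApply, hF, mul_zero, sub_zero]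

/-- Suppose every consecutive-tail discrete Wronskian
`Wr(fₙ,…,fᵢ)` of `f₁,…,fₙ` is (nowhere) zero, and let `S = Tⁿ + ∑ aⱼ T^{n-j}` be the monic
difference operator of order `n` annihilating `f₁,…,fₙ`.  Then `S` factors as
`S = (T − g₁(x+1)/g₁(x)) ∘ ⋯ ∘ (T − gₙ(x+1)/gₙ(x))`, where `gₙ = fₙ` and
`gᵢ = Wr(fₙ,…,fᵢ)/Wr(fₙ,…,fᵢ₊₁)` for `i = 1,…,n−1` (here `g i` below is `g_{i+1}` with `i`
zero-based, given by the ratio of the Wronskians of the tails dropping `i` resp. `i+1`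
functions). -/
theorem stmt1 {n : ℕ} (f : Fin n → ℂ → ℂ)
    (hW : ∀ i ≤ n, ∀ x : ℂ, dWrL ((List.ofFn f).drop i) x ≠ 0)
    (a : Fin n → ℂ → ℂ)
    (hS : ∀ i x, diffOpApply a (f i) x = 0) :
    ∀ (h : ℂ → ℂ) (x : ℂ),
      diffOpApply a h x =
        (((List.ofFn fun i : Fin n => fun y : ℂ =>
            (dWrL ((List.ofFn f).drop i) (y + 1) / dWrL ((List.ofFn f).drop (i + 1)) (y + 1)) /
            (dWrL ((List.ofFn f).drop i) y / dWrL ((List.ofFn f).drop (i + 1)) y)).foldr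
          factorApply h) x) := by
  intro h x
  change diffOpApply a h x = (wronskianFactors f).foldr factorApply h x
  obtain ⟨c, hc⟩ : ∃ c : Fin n → ℂ → ℂ,
      ∀ h, (wronskianFactors f).foldr factorApply h = monicDiffOp c h :=
    exists_foldr_factorApply_eq_monicDiffOp _
  have hf : dWr f x ≠ 0 := by simpa only [List.drop_zero, dWrL_ofFn] using hW 0 n.zero_le x
  have hfactors : ∀ i, monicDiffOp c (f i) x = 0 := fun i => by
    rw [← hc]
    exact foldr_wronskianFactors_apply_eq_zero f hW i x
  rw [diffOpApply_eq_monicDiffOp] at hS ⊢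
  rw [hc, monicDiffOp_eq_dWr_cons_div hf (hS · x), monicDiffOp_eq_dWr_cons_div hf hfactors]
end

section
/- If W₁ and W₂ are two spaces of quasi-exponentials (finite-dimensional spaces with bases of quasi-exponentials) whose monic fundamental difference operators coincide, S_{W₁} = S_{W₂}, then W₁ = W₂. -/
/-!
Put `V = W₁ + W₂`. Every element of `V` is annihilated by the monic operator `S` of order `n`,
so its values on `ℕ` are determined by those at `0, …, n - 1`. A combination of
quasi-exponentials that vanishes on `ℕ` is zero, hence evaluation at `0, …, n - 1` is injective
on `V`, so `dim V ≤ n = dim W₁ = dim W₂` and `W₁ = V = W₂`.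

The vanishing statement is the independence of the sequences `m ↦ αᵐ p(m)` for distinct
`α ≠ 0`. For `E` the shift, `(E - α₀)^(deg p_{α₀} + 1)` kills the `α₀`-term and acts injectively
on the polynomial parts of the other terms, so induction on the number of exponents applies.
-/

/-- A quasi-exponential: a function of the form `x ↦ αˣ p(x)` with `α ∈ ℂ*` and `p ∈ ℂ[x]`. -/
def IsQuasiExponential (g : ℂ → ℂ) : Prop :=
  ∃ (α : ℂ) (p : Polynomial ℂ), α ≠ 0 ∧
    ∀ x : ℂ, g x = Complex.exp (x * Complex.log α) * p.eval x

open Polynomial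

namespace Polynomial

variable {R : Type*} [CommRing R]

/-- `u ↦ u(· + 1) - γ u` maps `m ↦ βᵐ p(m)` to `m ↦ βᵐ (shiftSub β γ p)(m)`. -/
noncomputable def shiftSub (β γ : R) : R[X] →ₗ[R] R[X] := β • taylor 1 - γ • LinearMap.id

lemma eval_shiftSub (β γ : R) (p : R[X]) (x : R) :
    (shiftSub β γ p).eval x = β * p.eval (x + 1) - γ * p.eval x := by
  simp [shiftSub, taylor_eval]

lemma eval_shiftSub_self_pow (α : R) (p : R[X]) (k : ℕ) (x : R) :
    ((shiftSub α α ^ k) p).eval x = α ^ k * (fwdDiff 1)^[k] p.eval x := by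
  induction k generalizing x with
  | zero => simp
  | succ k ih =>
    rw [pow_succ', Module.End.mul_apply, eval_shiftSub, ih, ih, Function.iterate_succ_apply',
      fwdDiff]
    ring

lemma shiftSub_self_pow_natDegree_succ [IsDomain R] [Infinite R] (α : R) (p : R[X]) :
    (shiftSub α α ^ (p.natDegree + 1)) p = 0 :=
  Polynomial.funext fun x => by
    rw [eval_shiftSub_self_pow, fwdDiff_iter_degree_add_one_eq_zero]
    simp

lemma shiftSub_injective [IsDomain R] {β γ : R} (h : β ≠ γ) :
    Function.Injective (shiftSub β γ) := by
  refine (injective_iff_map_eq_zero _).2 fun p hp => ?_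
  by_contra hp0
  have hlc := congrArg (coeff · p.natDegree) hp
  simp only [shiftSub, LinearMap.sub_apply, LinearMap.smul_apply, LinearMap.id_apply, coeff_sub,
    coeff_smul, coeff_taylor_natDegree, coeff_natDegree, smul_eq_mul, coeff_zero] at hlc
  rw [← sub_mul, mul_eq_zero, sub_eq_zero, leadingCoeff_eq_zero] at hlc
  exact hlc.elim h hp0

lemma sum_pow_mul_eval_shiftSub (S : Finset R) (P : R → R[X]) (γ : R) (m : ℕ) :
    ∑ α ∈ S, α ^ m * (shiftSub α γ (P α)).eval (m : R) =
      ∑ α ∈ S, α ^ (m + 1) * (P α).eval ((m + 1 : ℕ) : R) -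
        γ * ∑ α ∈ S, α ^ m * (P α).eval (m : R) := by
  simp only [eval_shiftSub, Finset.mul_sum, ← Finset.sum_sub_distrib, Nat.cast_succ]
  refine Finset.sum_congr rfl fun α _ => by ring

lemma sum_pow_mul_eval_shiftSub_pow_eq_zero {S : Finset R} {P : R → R[X]}
    (h : ∀ m : ℕ, ∑ α ∈ S, α ^ m * (P α).eval (m : R) = 0) (γ : R) (k : ℕ) (m : ℕ) :
    ∑ α ∈ S, α ^ m * ((shiftSub α γ ^ k) (P α)).eval (m : R) = 0 := by
  induction k generalizing m with
  | zero => exact h m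
  | succ k ih =>
    simp only [pow_succ', Module.End.mul_apply]
    rw [sum_pow_mul_eval_shiftSub, ih, ih, mul_zero, sub_zero]

theorem eq_zero_of_sum_pow_mul_eval_eq_zero [IsDomain R] [CharZero R] {S : Finset R}
    (hS : ∀ α ∈ S, α ≠ 0) {P : R → R[X]}
    (h : ∀ m : ℕ, ∑ α ∈ S, α ^ m * (P α).eval (m : R) = 0) : ∀ α ∈ S, P α = 0 := by
  classical
  induction S using Finset.induction_on generalizing P with
  | empty => simp
  | insert α₀ T hα₀ ih =>
    set k := (P α₀).natDegree + 1
    have hQ := sum_pow_mul_eval_shiftSub_pow_eq_zero h α₀ k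
    have hkill : (shiftSub α₀ α₀ ^ k) (P α₀) = 0 := shiftSub_self_pow_natDegree_succ α₀ (P α₀)
    simp only [Finset.sum_insert hα₀, hkill, eval_zero, mul_zero, zero_add] at hQ
    have hT : ∀ α ∈ T, P α = 0 := fun α hα => by
      have hne : α ≠ α₀ := by rintro rfl; exact hα₀ hα
      refine (injective_iff_map_eq_zero _).1
        (Module.End.iterate_injective (shiftSub_injective hne) k) (P α) ?_
      exact ih (fun β hβ => hS β (Finset.mem_insert_of_mem hβ)) hQ α hα
    have hP₀ : P α₀ = 0 := by
      refine eq_zero_of_infinite_isRoot _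
        ((Set.infinite_range_of_injective Nat.cast_injective).mono ?_)
      rintro _ ⟨m, rfl⟩
      have hm := h m
      rw [Finset.sum_insert hα₀, Finset.sum_eq_zero fun α hα => by simp [hT α hα], add_zero] at hm
      exact (mul_eq_zero.1 hm).resolve_left (pow_ne_zero m (hS α₀ (Finset.mem_insert_self _ _)))
    simpa [hP₀] using hT

end Polynomial

open Complex

noncomputable def quasiExpSpan : Submodule ℂ (ℂ → ℂ) :=
  Submodule.span ℂ {g | IsQuasiExponential g}

noncomputable def quasiExpₗ (α : ℂ) : ℂ[X] →ₗ[ℂ] ℂ → ℂ where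
  toFun p x := cexp (x * log α) * p.eval x
  map_add' p q := by ext x; simp [mul_add]
  map_smul' c p := by
    ext x
    simp only [eval_smul, smul_eq_mul, Pi.smul_apply, RingHom.id_apply]
    ring

noncomputable def quasiExpSum : (ℂ →₀ ℂ[X]) →ₗ[ℂ] ℂ → ℂ :=
  Finsupp.lsum ℂ quasiExpₗ

lemma quasiExpSpan_le_map_quasiExpSum :
    quasiExpSpan ≤ (Finsupp.supported ℂ[X] ℂ {0}ᶜ).map quasiExpSum := by
  refine Submodule.span_le.2 ?_
  rintro g ⟨α, p, hα, hg⟩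
  refine ⟨Finsupp.single α p, Finsupp.single_mem_supported ℂ p hα, ?_⟩
  rw [quasiExpSum, Finsupp.lsum_single]
  exact funext fun x => (hg x).symm

lemma quasiExpSum_natCast {P : ℂ →₀ ℂ[X]} (hP : P ∈ Finsupp.supported ℂ[X] ℂ {0}ᶜ) (m : ℕ) :
    quasiExpSum P m = ∑ α ∈ P.support, α ^ m * (P α).eval (m : ℂ) := by
  rw [quasiExpSum, Finsupp.lsum_apply, Finsupp.sum, Finset.sum_apply]
  refine Finset.sum_congr rfl fun α hα => ?_
  rw [quasiExpₗ, LinearMap.coe_mk, AddHom.coe_mk, exp_nat_mul,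
    exp_log ((Finsupp.mem_supported _ _).1 hP hα)]

theorem eq_zero_of_mem_quasiExpSpan {g : ℂ → ℂ} (hg : g ∈ quasiExpSpan)
    (h : ∀ m : ℕ, g m = 0) : g = 0 := by
  obtain ⟨P, hP, rfl⟩ := quasiExpSpan_le_map_quasiExpSum hg
  have hP0 := eq_zero_of_sum_pow_mul_eval_eq_zero (fun α hα => (Finsupp.mem_supported _ _).1 hP hα)
    fun m => (quasiExpSum_natCast hP m).symm.trans (h m)
  obtain rfl : P = 0 := Finsupp.ext fun α => by
    by_contra hα
    exact hα (hP0 α (Finsupp.mem_support_iff.2 hα))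
  exact map_zero _

noncomputable def diffOpₗ {n : ℕ} (a : Fin n → ℂ → ℂ) : (ℂ → ℂ) →ₗ[ℂ] ℂ → ℂ where
  toFun g := diffOpApply a g
  map_add' g₁ g₂ := by
    ext x
    simp only [diffOpApply, Pi.add_apply, mul_add, Finset.sum_add_distrib]
    ring
  map_smul' c g := by
    ext x
    simp [diffOpApply, mul_add, Finset.mul_sum, mul_left_comm]

lemma eq_zero_of_diffOpApply_eq_zero {n : ℕ} (a : Fin n → ℂ → ℂ) {u : ℂ → ℂ}
    (hu : ∀ m : ℕ, diffOpApply a u m = 0) (h0 : ∀ i : Fin n, u (i : ℕ) = 0) (m : ℕ) :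
    u m = 0 := by
  induction m using Nat.strong_induction_on with
  | _ m ih =>
    rcases lt_or_ge m n with hm | hm
    · exact h0 ⟨m, hm⟩
    obtain ⟨k, rfl⟩ := Nat.exists_eq_add_of_le hm
    have hk := hu k
    rw [diffOpApply, Finset.sum_eq_zero fun j _ => ?_, add_zero, add_comm] at hk
    · exact_mod_cast hk
    · rw [← Nat.cast_add, ih _ (by omega), mul_zero]

def evalFin (n : ℕ) : (ℂ → ℂ) →ₗ[ℂ] Fin n → ℂ :=
  LinearMap.pi fun i => LinearMap.proj ((i : ℕ) : ℂ)

lemma injective_evalFin_comp_subtype {n : ℕ} {a : Fin n → ℂ → ℂ} {V : Submodule ℂ (ℂ → ℂ)}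
    (hVq : V ≤ quasiExpSpan) (hVa : V ≤ LinearMap.ker (diffOpₗ a)) :
    Function.Injective ((evalFin n).comp V.subtype) := by
  refine (injective_iff_map_eq_zero _).2 fun ⟨g, hg⟩ hg0 => Subtype.ext ?_
  refine eq_zero_of_mem_quasiExpSpan (hVq hg) (eq_zero_of_diffOpApply_eq_zero a ?_ ?_)
  · exact fun m => congrFun (LinearMap.mem_ker.1 (hVa hg)) m
  · exact fun i => congrFun hg0 i

lemma span_range_eq_of_le_ker_diffOp {n : ℕ} {f : Fin n → ℂ → ℂ} (hfi : LinearIndependent ℂ f)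
    {a : Fin n → ℂ → ℂ} {V : Submodule ℂ (ℂ → ℂ)} (hVq : V ≤ quasiExpSpan)
    (hVa : V ≤ LinearMap.ker (diffOpₗ a)) (hle : Submodule.span ℂ (Set.range f) ≤ V) :
    Submodule.span ℂ (Set.range f) = V := by
  have hinj := injective_evalFin_comp_subtype hVq hVa
  have := FiniteDimensional.of_injective _ hinj
  refine Submodule.eq_of_le_of_finrank_le hle ?_
  calc Module.finrank ℂ V ≤ Module.finrank ℂ (Fin n → ℂ) :=
        LinearMap.finrank_le_finrank_of_injective hinj
    _ = Module.finrank ℂ (Submodule.span ℂ (Set.range f)) := by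
        rw [finrank_span_eq_card hfi, Module.finrank_fin_fun, Fintype.card_fin]

/-- If `W₁` and `W₂` are two spaces of quasi-exponentials (finite-dimensional
spaces spanned by linearly independent quasi-exponentials) whose monic fundamental difference
operators coincide (both are of order `n = dim W₁ = dim W₂` and annihilate the respective
spaces), then `W₁ = W₂`. -/
theorem stmt4 {n : ℕ} (f h : Fin n → ℂ → ℂ)
    (hf : ∀ i, IsQuasiExponential (f i)) (hh : ∀ i, IsQuasiExponential (h i))
    (hfi : LinearIndependent ℂ f) (hhi : LinearIndependent ℂ h)
    (W₁ W₂ : Submodule ℂ (ℂ → ℂ))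
    (hW₁ : W₁ = Submodule.span ℂ (Set.range f))
    (hW₂ : W₂ = Submodule.span ℂ (Set.range h))
    (a : Fin n → ℂ → ℂ)
    (hann₁ : ∀ g ∈ W₁, ∀ x, diffOpApply a g x = 0)
    (hann₂ : ∀ g ∈ W₂, ∀ x, diffOpApply a g x = 0) :
    W₁ = W₂ := by
  have hVq : W₁ ⊔ W₂ ≤ quasiExpSpan := by
    rw [hW₁, hW₂]
    exact sup_le (Submodule.span_mono (Set.range_subset_iff.2 hf))
      (Submodule.span_mono (Set.range_subset_iff.2 hh))
  have hVa : W₁ ⊔ W₂ ≤ LinearMap.ker (diffOpₗ a) :=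
    sup_le (fun g hg => funext (hann₁ g hg)) (fun g hg => funext (hann₂ g hg))
  subst hW₁ hW₂
  exact (span_range_eq_of_le_ker_diffOp hfi hVq hVa le_sup_left).trans
    (span_range_eq_of_le_ker_diffOp hhi hVq hVa le_sup_right).symm
end

section
/- Let μ be a partition with n = μ′₁ nonzero parts, and let p = μ₁ + n. Then the set {0,1,…,p−1} ∖ { n + μⱼ − j : j = 1,…,n } equals { n − μ′ₗ + ℓ − 1 : ℓ = 1,…,μ₁ }, where μ′ is the conjugate partition. -/
/-- Let `μ` be a partition (antitone, parts indexed from `0` here, so the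
`j`-th part, `1`-based, is `μ (j-1)`) with exactly `n` nonzero parts (`n = μ′₁`), and let
`p = μ₁ + n`.  Then
`{0,1,…,p−1} ∖ { n + μⱼ − j : j = 1,…,n } = { n − μ′ₗ + ℓ − 1 : ℓ = 1,…,μ₁ }`,
where `μ′ₗ = #{ j : μⱼ ≥ ℓ }` is the conjugate partition. -/
theorem stmt6 (μ : ℕ → ℕ) (n : ℕ)
    (hmono : Antitone μ) (hn : ∀ j, 0 < μ j ↔ j < n) :
    Finset.range (μ 0 + n) \
        (Finset.range n).image (fun j => n + μ j - (j + 1)) =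
      (Finset.range (μ 0)).image
        (fun l => n - ((Finset.range n).filter (fun j => l + 1 ≤ μ j)).card + l) := by
  have hμpos : ∀ j < n, 1 ≤ μ j := fun j hj => (hn j).2 hj
  have hcle : ∀ l, ((Finset.range n).filter (fun j => l + 1 ≤ μ j)).card ≤ n := fun l =>
    le_trans (Finset.card_filter_le _ _) (by simp)
  have hclow : ∀ j l, j < n → l + 1 ≤ μ j →
      j + 1 ≤ ((Finset.range n).filter (fun i => l + 1 ≤ μ i)).card := by
    intro j l hj hl
    have hsub : Finset.range (j + 1) ⊆ (Finset.range n).filter (fun i => l + 1 ≤ μ i) := by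
      intro i hi
      simp only [Finset.mem_range] at hi
      simp only [Finset.mem_filter, Finset.mem_range]
      exact ⟨lt_of_lt_of_le hi hj, le_trans hl (hmono (Nat.lt_succ_iff.mp hi))⟩
    simpa using Finset.card_le_card hsub
  have hchigh : ∀ j l, μ j ≤ l → ((Finset.range n).filter (fun i => l + 1 ≤ μ i)).card ≤ j := by
    intro j l hl
    have hsub : (Finset.range n).filter (fun i => l + 1 ≤ μ i) ⊆ Finset.range j := by
      intro i hi
      simp only [Finset.mem_filter, Finset.mem_range] at hi
      simp only [Finset.mem_range]
      by_contra h
      push_neg at h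
      have := hmono h
      omega
    simpa using Finset.card_le_card hsub
  have hcanti : ∀ l l', l ≤ l' →
      ((Finset.range n).filter (fun i => l' + 1 ≤ μ i)).card ≤
      ((Finset.range n).filter (fun i => l + 1 ≤ μ i)).card := by
    intro l l' h
    apply Finset.card_le_card
    intro i hi
    simp only [Finset.mem_filter] at hi ⊢
    exact ⟨hi.1, by omega⟩
  have hA_sub : (Finset.range n).image (fun j => n + μ j - (j + 1)) ⊆
      Finset.range (μ 0 + n) := by
    intro m hm
    simp only [Finset.mem_image, Finset.mem_range] at hm ⊢
    obtain ⟨j, hj, rfl⟩ := hm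
    have := hmono (Nat.zero_le j)
    omega
  have hcardA : ((Finset.range n).image (fun j => n + μ j - (j + 1))).card = n := by
    rw [Finset.card_image_of_injOn, Finset.card_range]
    intro j hj j' hj' hjj'
    simp only [Finset.coe_range, Set.mem_Iio] at hj hj'
    simp only at hjj'
    rcases lt_trichotomy j j' with h | h | h
    · have h1 := hmono h.le
      have h2 := hμpos j' hj'
      omega
    · exact h
    · have h1 := hmono h.le
      have h2 := hμpos j hj
      omega
  have hcardB : ((Finset.range (μ 0)).image
      (fun l => n - ((Finset.range n).filter (fun j => l + 1 ≤ μ j)).card + l)).card = μ 0 := by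
    rw [Finset.card_image_of_injOn, Finset.card_range]
    intro l hl l' hl' hll'
    simp only at hll'
    rcases lt_trichotomy l l' with h | h | h
    · have h1 := hcanti l l' h.le
      have h2 := hcle l
      have h3 := hcle l'
      omega
    · exact h
    · have h1 := hcanti l' l h.le
      have h2 := hcle l
      have h3 := hcle l'
      omega
  have hsub : (Finset.range (μ 0)).image
      (fun l => n - ((Finset.range n).filter (fun j => l + 1 ≤ μ j)).card + l) ⊆
      Finset.range (μ 0 + n) \ (Finset.range n).image (fun j => n + μ j - (j + 1)) := by
    intro m hm
    simp only [Finset.mem_image, Finset.mem_range] at hm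
    obtain ⟨l, hl, rfl⟩ := hm
    rw [Finset.mem_sdiff]
    constructor
    · simp only [Finset.mem_range]
      have := hcle l
      omega
    · simp only [Finset.mem_image, Finset.mem_range, not_exists, not_and]
      intro j hj hjl
      by_cases h : l + 1 ≤ μ j
      · have h1 := hclow j l hj h
        have h2 := hcle l
        omega
      · push_neg at h
        have h1 := hchigh j l (by omega)
        have h2 := hcle l
        have h3 := hμpos j hj
        omega
  refine (Finset.eq_of_subset_of_card_le hsub ?_).symm
  rw [Finset.card_sdiff_of_subset hA_sub, hcardA, hcardB, Finset.card_range]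
  omega
end

section
/- Let ℙ_{kn} be the exterior algebra on kn anticommuting generators ξ_{ai} (a=1,…,k, i=1,…,n) with left derivations ∂_{ai}. Define actions ρ^{⟨k,n⟩}((e_{ab})_{(i)}) = ξ_{ai}∂_{bi} and ρ^{⟨n,k⟩}((e_{ij})_{(a)}) = ξ_{ai}∂_{aj}. Then for each i = 1,…,n, ρ^{⟨k,n⟩}(H_i^{⟨k,n⟩}(ᾱ, z̄)) = −ρ^{⟨n,k⟩}(G_i^{⟨n,k⟩}(−z̄+1, ᾱ)) as operators on ℙ_{kn}, where H_i is the trigonometric Gaudin Hamiltonian and G_i the trigonometric dynamical Hamiltonian. -/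
/-- The space `ℙ_{kn}`: the exterior algebra on `kn` anticommuting generators `ξ_{ai}`. -/
abbrev Pkn (k n : ℕ) := ExteriorAlgebra ℂ (Fin k × Fin n → ℂ)

/-- Left multiplication by the generator `ξ_{ai}` of `ℙ_{kn}`. -/
noncomputable def xiOp (k n : ℕ) (p : Fin k × Fin n) : Module.End ℂ (Pkn k n) :=
  LinearMap.mulLeft ℂ (ExteriorAlgebra.ι ℂ (Pi.single p 1))

/-- `ρ^{⟨k,n⟩}((e_{ab})_{(i)}) = ξ_{ai}∂_{bi}`. -/
noncomputable def Ek {k n : ℕ} (D : Fin k × Fin n → Module.End ℂ (Pkn k n))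
    (a b : Fin k) (i : Fin n) : Module.End ℂ (Pkn k n) :=
  xiOp k n (a, i) ∘ₗ D (b, i)

/-- `ρ^{⟨n,k⟩}((e_{ij})_{(a)}) = ξ_{ai}∂_{aj}`. -/
noncomputable def En {k n : ℕ} (D : Fin k × Fin n → Module.End ℂ (Pkn k n))
    (i j : Fin n) (a : Fin k) : Module.End ℂ (Pkn k n) :=
  xiOp k n (a, i) ∘ₗ D (a, j)

/-- `ρ^{⟨k,n⟩}(Ω⁺_{(ij)})`. -/
noncomputable def OmegaP {k n : ℕ} (D : Fin k × Fin n → Module.End ℂ (Pkn k n))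
    (i j : Fin n) : Module.End ℂ (Pkn k n) :=
  (2 : ℂ)⁻¹ • (∑ a : Fin k, Ek D a a i ∘ₗ Ek D a a j) +
    ∑ a : Fin k, ∑ b ∈ Finset.univ.filter (fun b : Fin k => a < b),
      Ek D a b i ∘ₗ Ek D b a j

/-- `ρ^{⟨k,n⟩}(Ω⁻_{(ij)})`. -/
noncomputable def OmegaM {k n : ℕ} (D : Fin k × Fin n → Module.End ℂ (Pkn k n))
    (i j : Fin n) : Module.End ℂ (Pkn k n) :=
  (2 : ℂ)⁻¹ • (∑ a : Fin k, Ek D a a i ∘ₗ Ek D a a j) +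
    ∑ a : Fin k, ∑ b ∈ Finset.univ.filter (fun b : Fin k => a < b),
      Ek D b a i ∘ₗ Ek D a b j

/-- The image `ρ^{⟨k,n⟩}(H_i^{⟨k,n⟩}(ᾱ, z̄))` of the `i`-th trigonometric Gaudin Hamiltonian
`H_i = ∑_a (z_a − e_{aa}/2)(e_{aa})_{(i)} + ∑_{j≠i} (α_i Ω⁺_{(ij)} + α_j Ω⁻_{(ij)})/(α_i − α_j)`. -/
noncomputable def GaudinH {k n : ℕ} (D : Fin k × Fin n → Module.End ℂ (Pkn k n))
    (α : Fin n → ℂ) (z : Fin k → ℂ) (i : Fin n) : Module.End ℂ (Pkn k n) :=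
  (∑ a : Fin k, (z a • Ek D a a i -
      (2 : ℂ)⁻¹ • ((∑ i' : Fin n, Ek D a a i') ∘ₗ Ek D a a i))) +
    ∑ j ∈ Finset.univ.filter (fun j : Fin n => j ≠ i),
      (α i - α j)⁻¹ • (α i • OmegaP D i j + α j • OmegaM D i j)

/-- The image `ρ^{⟨n,k⟩}(G_i^{⟨n,k⟩}(z̄, ᾱ))` of the `i`-th trigonometric dynamical Hamiltonian
`G_i = −e_{ii}²/2 + ∑_a z_a (e_{ii})_{(a)} + ∑_{j≠i} α_j/(α_i−α_j)(e_{ij}e_{ji} − e_{ii})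
 + ∑_j ∑_{a<b} (e_{ij})_{(a)}(e_{ji})_{(b)}`. -/
noncomputable def DynG {k n : ℕ} (D : Fin k × Fin n → Module.End ℂ (Pkn k n))
    (z : Fin k → ℂ) (α : Fin n → ℂ) (i : Fin n) : Module.End ℂ (Pkn k n) :=
  (-(2 : ℂ)⁻¹) • ((∑ a : Fin k, En D i i a) ∘ₗ ∑ a : Fin k, En D i i a) +
    (∑ a : Fin k, z a • En D i i a) +
    (∑ j ∈ Finset.univ.filter (fun j : Fin n => j ≠ i),
      (α j * (α i - α j)⁻¹) •
        (((∑ a : Fin k, En D i j a) ∘ₗ ∑ b : Fin k, En D j i b) -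
          ∑ a : Fin k, En D i i a)) +
    ∑ j : Fin n, ∑ a : Fin k, ∑ b ∈ Finset.univ.filter (fun b : Fin k => a < b),
      En D i j a ∘ₗ En D j i b

/-!
Under `ρ^{⟨k,n⟩}` and `ρ^{⟨n,k⟩}` both Hamiltonians become quadratic expressions in the bilinears
`ξ_p ∂_q`, and the operators `ξ_p`, `∂_q` satisfy the canonical anticommutation relations (the
anticommutator of two derivations `∂_p`, `∂_q` commutes with left multiplication and kills `1`,
hence vanishes). Normal ordering, `ξ_p ∂_q ξ_r ∂_s = δ_{qr} ξ_p ∂_s + ξ_p ξ_r ∂_s ∂_q`, brings both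
sides to the form `∑_a z_a ξ_{ai}∂_{ai} - ½ ∑_a ξ_{ai}∂_{ai}` plus, for every `j ≠ i`, a
combination of the sums over `a = b`, `a < b` and `a > b` of `ξ_{ai} ξ_{bj} ∂_{bi} ∂_{aj}`. The
shift `z ↦ 1 - z` absorbs the linear term produced by normal ordering `e_{ii}²`, and the
coefficients of the three sums agree by an identity of rational functions in `α_i`, `α_j`.
-/

open Finset

section DoubleSum

variable {ι M : Type*} [Fintype ι] [LinearOrder ι] [AddCommMonoid M]

theorem Fintype.sum_sum_eq_sum_diag_add_sum_lt (f : ι → ι → M) :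
    ∑ a, ∑ b, f a b =
      ∑ a, f a a + ∑ a, ∑ b ∈ univ.filter (a < ·), f a b +
        ∑ a, ∑ b ∈ univ.filter (a < ·), f b a := by
  have hrow (a : ι) : ∑ b, f a b =
      f a a + ∑ b ∈ univ.filter (a < ·), f a b + ∑ b ∈ univ.filter (· < a), f a b := by
    rw [← sum_filter_add_sum_filter_not univ (a < ·), add_comm (f a a), add_assoc]
    congr 1
    have : univ.filter (¬ a < ·) = insert a (univ.filter (· < a)) := by
      ext b
      simp [le_iff_lt_or_eq, eq_comm, or_comm]
    rw [this, sum_insert (by simp), add_comm]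
  have hbelow : ∑ a, ∑ b ∈ univ.filter (· < a), f a b =
      ∑ a, ∑ b ∈ univ.filter (a < ·), f b a :=
    sum_comm' fun _ _ => by simp
  simp only [hrow, sum_add_distrib, hbelow]

end DoubleSum

structure IsCAR {ι R : Type*} [DecidableEq ι] [Ring R] (ξ d : ι → R) : Prop where
  xi_mul_self : ∀ p, ξ p * ξ p = 0
  xi_mul_xi : ∀ p q, ξ p * ξ q = -(ξ q * ξ p)
  d_mul_d : ∀ p q, d p * d q = -(d q * d p)
  d_mul_xi : ∀ p q, d p * ξ q = (if p = q then 1 else 0) - ξ q * d p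

namespace IsCAR

variable {ι R : Type*} [DecidableEq ι] [Ring R] {ξ d : ι → R}

theorem xi_d_mul_xi_d (h : IsCAR ξ d) (p q r s : ι) :
    ξ p * d q * (ξ r * d s) = (if q = r then ξ p * d s else 0) + ξ p * ξ r * (d s * d q) := by
  have : ξ p * d q * (ξ r * d s) = ξ p * (d q * ξ r) * d s := by noncomm_ring
  rw [this, h.d_mul_xi, h.d_mul_d s q]
  split_ifs <;> noncomm_ring

theorem xi_xi_d_d_swap (h : IsCAR ξ d) (p q r s : ι) :
    ξ p * ξ q * (d r * d s) = ξ q * ξ p * (d s * d r) := by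
  rw [h.xi_mul_xi p q, h.d_mul_d r s]
  noncomm_ring

end IsCAR

theorem ExteriorAlgebra.eq_zero_of_map_ι_mul {R M : Type*} [CommRing R] [AddCommGroup M]
    [Module R M] (F : Module.End R (ExteriorAlgebra R M)) (h1 : F 1 = 0)
    (hι : ∀ v w, F (ι R v * w) = ι R v * F w) : F = 0 := by
  have hmul (x w : ExteriorAlgebra R M) : F (x * w) = x * F w := by
    induction x using ExteriorAlgebra.induction generalizing w with
    | algebraMap r => simp only [← Algebra.smul_def, map_smul]
    | ι v => exact hι v w
    | mul x y hx hy => rw [mul_assoc, hx, hy, mul_assoc]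
    | add x y hx hy => rw [add_mul, map_add, hx, hy, add_mul]
  refine LinearMap.ext fun w => ?_
  rw [← mul_one w, hmul, h1, mul_zero, LinearMap.zero_apply]

section Derivations

variable {k n : ℕ} {D : Fin k × Fin n → Module.End ℂ (Pkn k n)}

theorem xiOp_eq_lmul (p : Fin k × Fin n) :
    xiOp k n p = Algebra.lmul ℂ (Pkn k n) (ExteriorAlgebra.ι ℂ (Pi.single p 1)) :=
  rfl

theorem derivations_anticomm (hD1 : ∀ p, D p 1 = 0)
    (hDer : ∀ (p : Fin k × Fin n) (v : Fin k × Fin n → ℂ) (w : Pkn k n),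
      D p (ExteriorAlgebra.ι ℂ v * w) = v p • w - ExteriorAlgebra.ι ℂ v * D p w)
    (p q : Fin k × Fin n) : D p * D q + D q * D p = 0 := by
  refine ExteriorAlgebra.eq_zero_of_map_ι_mul _ (by simp [hD1]) fun v w => ?_
  simp only [LinearMap.add_apply, Module.End.mul_apply, hDer, map_sub, map_smul, mul_add]
  module

theorem isCAR_xiOp (hD1 : ∀ p, D p 1 = 0)
    (hDer : ∀ (p : Fin k × Fin n) (v : Fin k × Fin n → ℂ) (w : Pkn k n),
      D p (ExteriorAlgebra.ι ℂ v * w) = v p • w - ExteriorAlgebra.ι ℂ v * D p w) :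
    IsCAR (xiOp k n) D where
  xi_mul_self p := by rw [xiOp_eq_lmul, ← map_mul, ExteriorAlgebra.ι_sq_zero, map_zero]
  xi_mul_xi p q := by
    rw [← add_eq_zero_iff_eq_neg, xiOp_eq_lmul, xiOp_eq_lmul, ← map_mul (Algebra.lmul ℂ _),
      ← map_mul (Algebra.lmul ℂ _), ← map_add, ExteriorAlgebra.ι_add_mul_swap, map_zero]
  d_mul_d p q := eq_neg_of_add_eq_zero_left (derivations_anticomm hD1 hDer p q)
  d_mul_xi p q := by
    refine LinearMap.ext fun w => ?_
    simp only [Module.End.mul_apply, LinearMap.sub_apply, xiOp, LinearMap.mulLeft_apply, hDer,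
      Pi.single_apply]
    split_ifs <;> simp

end Derivations

section Hamiltonians

variable {k n : ℕ} {D : Fin k × Fin n → Module.End ℂ (Pkn k n)}

variable (D) in
noncomputable def wickTerm (i j : Fin n) (a b : Fin k) : Module.End ℂ (Pkn k n) :=
  xiOp k n (a, i) * xiOp k n (b, j) * (D (b, i) * D (a, j))

variable (D) in
noncomputable def wickDiag (i j : Fin n) : Module.End ℂ (Pkn k n) :=
  ∑ a, wickTerm D i j a a

variable (D) in
noncomputable def wickUpper (i j : Fin n) : Module.End ℂ (Pkn k n) :=
  ∑ a, ∑ b ∈ univ.filter (a < ·), wickTerm D i j a b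

variable (D) in
noncomputable def wickLower (i j : Fin n) : Module.End ℂ (Pkn k n) :=
  ∑ a, ∑ b ∈ univ.filter (a < ·), wickTerm D i j b a

theorem Ek_self (a : Fin k) (i : Fin n) : Ek D a a i = En D i i a :=
  rfl

variable (h : IsCAR (xiOp k n) D)
include h

theorem En_comp_En (i j : Fin n) (a b : Fin k) :
    En D i j a ∘ₗ En D j i b = (if a = b then En D i i a else 0) + wickTerm D i j a b := by
  refine (h.xi_d_mul_xi_d (a, i) (a, j) (b, j) (b, i)).trans ?_
  simp only [Prod.mk.injEq, and_true]
  split_ifs with hab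
  · subst hab; rfl
  · rfl

theorem Ek_comp_Ek (a b : Fin k) (i j : Fin n) :
    Ek D a b i ∘ₗ Ek D b a j = (if i = j then Ek D a a i else 0) - wickTerm D i j a b := by
  refine (h.xi_d_mul_xi_d (a, i) (b, i) (b, j) (a, j)).trans ?_
  simp only [h.d_mul_d (a, j), Prod.mk.injEq, true_and]
  rw [mul_neg (xiOp k n (a, i) * xiOp k n (b, j)), ← sub_eq_add_neg]
  split_ifs with hij
  · subst hij; rfl
  · rfl

theorem wickTerm_comm (i j : Fin n) (a b : Fin k) : wickTerm D i j a b = wickTerm D j i b a :=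
  h.xi_xi_d_d_swap _ _ _ _

theorem wickDiag_self (i : Fin n) : wickDiag D i i = 0 :=
  sum_eq_zero fun a _ => by rw [wickTerm, h.xi_mul_self, zero_mul]

theorem wickLower_self (i : Fin n) : wickLower D i i = wickUpper D i i := by
  simp only [wickLower, wickUpper, wickTerm_comm h i i]

theorem sum_En_comp_sum_En (i j : Fin n) :
    (∑ a, En D i j a) ∘ₗ ∑ b, En D j i b =
      ∑ a, En D i i a + (wickDiag D i j + wickUpper D i j + wickLower D i j) := by
  rw [← Module.End.mul_eq_comp, sum_mul]
  simp only [mul_sum, Module.End.mul_eq_comp, En_comp_En h, sum_add_distrib, sum_ite_eq,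
    mem_univ, if_true, Fintype.sum_sum_eq_sum_diag_add_sum_lt (wickTerm D i j)]
  rfl

theorem OmegaP_eq {i j : Fin n} (hij : i ≠ j) :
    OmegaP D i j = -((2 : ℂ)⁻¹ • wickDiag D i j + wickUpper D i j) := by
  simp only [OmegaP, Ek_comp_Ek h, if_neg hij, zero_sub, sum_neg_distrib, smul_neg, neg_add,
    wickDiag, wickUpper]

theorem OmegaM_eq {i j : Fin n} (hij : i ≠ j) :
    OmegaM D i j = -((2 : ℂ)⁻¹ • wickDiag D i j + wickLower D i j) := by
  simp only [OmegaM, Ek_comp_Ek h, if_neg hij, zero_sub, sum_neg_distrib, smul_neg, neg_add,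
    wickDiag, wickLower]

theorem sum_Ek_comp_Ek (a : Fin k) (i : Fin n) :
    (∑ i', Ek D a a i') ∘ₗ Ek D a a i = En D i i a - ∑ j, wickTerm D i j a a := by
  rw [← Module.End.mul_eq_comp, sum_mul]
  simp only [Module.End.mul_eq_comp, Ek_comp_Ek h, sum_sub_distrib, sum_ite_eq', mem_univ,
    if_true, wickTerm_comm h _ i a a]
  rfl

theorem GaudinH_eq (α : Fin n → ℂ) (z : Fin k → ℂ) (i : Fin n) :
    GaudinH D α z i =
      ∑ a, z a • En D i i a - (2 : ℂ)⁻¹ • ∑ a, En D i i a +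
        ∑ j ∈ univ.erase i, ((2 : ℂ)⁻¹ • wickDiag D i j +
          (α i - α j)⁻¹ • (α i • -((2 : ℂ)⁻¹ • wickDiag D i j + wickUpper D i j) +
            α j • -((2 : ℂ)⁻¹ • wickDiag D i j + wickLower D i j))) := by
  have hquad : ∑ a, (z a • Ek D a a i - (2 : ℂ)⁻¹ • ((∑ i', Ek D a a i') ∘ₗ Ek D a a i)) =
      ∑ a, z a • En D i i a - (2 : ℂ)⁻¹ • ∑ a, En D i i a +
        (2 : ℂ)⁻¹ • ∑ j ∈ univ.erase i, wickDiag D i j := by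
    rw [sum_erase _ (wickDiag_self h i)]
    simp only [sum_Ek_comp_Ek h]
    simp only [Ek_self, smul_sub, sum_sub_distrib, ← smul_sum, wickDiag]
    rw [sum_comm (f := fun a j => wickTerm D i j a a)]
    simp only [smul_sum]
    abel
  have hΩ : ∑ j ∈ univ.erase i, (α i - α j)⁻¹ • (α i • OmegaP D i j + α j • OmegaM D i j) =
      ∑ j ∈ univ.erase i, (α i - α j)⁻¹ •
        (α i • -((2 : ℂ)⁻¹ • wickDiag D i j + wickUpper D i j) +
          α j • -((2 : ℂ)⁻¹ • wickDiag D i j + wickLower D i j)) :=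
    sum_congr rfl fun j hj => by
      rw [OmegaP_eq h (ne_of_mem_erase hj).symm, OmegaM_eq h (ne_of_mem_erase hj).symm]
  rw [GaudinH, filter_ne', hquad, hΩ, sum_add_distrib, smul_sum (s := univ.erase i)]
  abel

theorem DynG_eq (z : Fin k → ℂ) (α : Fin n → ℂ) (i : Fin n) :
    DynG D z α i =
      ∑ a, z a • En D i i a - (2 : ℂ)⁻¹ • ∑ a, En D i i a +
        ∑ j ∈ univ.erase i, ((α j * (α i - α j)⁻¹) •
          (wickDiag D i j + wickUpper D i j + wickLower D i j) + wickUpper D i j) := by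
  have hcross : ∀ j, (∑ a, En D i j a) ∘ₗ (∑ b, En D j i b) - ∑ a, En D i i a =
      wickDiag D i j + wickUpper D i j + wickLower D i j := fun j => by
    rw [sum_En_comp_sum_En h, add_sub_cancel_left]
  have hupper : ∀ j, ∑ a, ∑ b ∈ univ.filter (a < ·), En D i j a ∘ₗ En D j i b =
      wickUpper D i j := fun j =>
    sum_congr rfl fun a _ => sum_congr rfl fun b hb => by
      rw [En_comp_En h, if_neg (mem_filter.mp hb).2.ne, zero_add]
  rw [DynG, filter_ne', sum_En_comp_sum_En h i i, wickDiag_self h, wickLower_self h]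
  simp only [hcross, hupper]
  rw [← add_sum_erase _ _ (mem_univ i), sum_add_distrib]
  module

end Hamiltonians

theorem half_smul_add_inv_sub_smul_eq {K M : Type*} [Field K] [CharZero K] [AddCommGroup M]
    [Module K M] {x y : K} (hxy : x ≠ y) (w u v : M) :
    (2 : K)⁻¹ • w + (x - y)⁻¹ • (x • -((2 : K)⁻¹ • w + u) + y • -((2 : K)⁻¹ • w + v)) =
      -((y * (x - y)⁻¹) • (w + u + v) + u) := by
  have : x - y ≠ 0 := sub_ne_zero.mpr hxy
  match_scalars <;> field_simp <;> ring

theorem stmt18_general (k n : ℕ) (z : Fin k → ℂ) (α : Fin n → ℂ)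
    (hα : Function.Injective α)
    (D : Fin k × Fin n → Module.End ℂ (Pkn k n))
    (hD1 : ∀ p, D p 1 = 0)
    (hDer : ∀ (p : Fin k × Fin n) (v : Fin k × Fin n → ℂ) (w : Pkn k n),
      D p (ExteriorAlgebra.ι ℂ v * w) = v p • w - ExteriorAlgebra.ι ℂ v * D p w) :
    ∀ i : Fin n,
      GaudinH D α z i = - DynG D (fun a => -z a + 1) α i := by
  intro i
  have h := isCAR_xiOp hD1 hDer
  rw [GaudinH_eq h, DynG_eq h, sum_congr rfl fun j hj =>
    half_smul_add_inv_sub_smul_eq (hα.ne (ne_of_mem_erase hj).symm)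
      (wickDiag D i j) (wickUpper D i j) (wickLower D i j)]
  simp only [add_smul, neg_smul, one_smul, sum_add_distrib, sum_neg_distrib]
  module

/-- On `ℙ_{kn}`, with `ξ_{ai}` the multiplication operators and `∂_{ai}`
the left derivations, and with `z₁,…,z_k`, `α₁,…,αₙ` pairwise distinct (`αᵢ ≠ 0`), for each
`i = 1,…,n`:
`ρ^{⟨k,n⟩}(H_i^{⟨k,n⟩}(ᾱ, z̄)) = −ρ^{⟨n,k⟩}(G_i^{⟨n,k⟩}(−z̄+1, ᾱ))` as operators on `ℙ_{kn}`. -/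
theorem stmt18 (k n : ℕ) (z : Fin k → ℂ) (α : Fin n → ℂ)
    (hz : Function.Injective z) (hα : Function.Injective α) (hα0 : ∀ i, α i ≠ 0)
    (D : Fin k × Fin n → Module.End ℂ (Pkn k n))
    (hD1 : ∀ p, D p 1 = 0)
    (hDer : ∀ (p : Fin k × Fin n) (v : Fin k × Fin n → ℂ) (w : Pkn k n),
      D p (ExteriorAlgebra.ι ℂ v * w) = v p • w - ExteriorAlgebra.ι ℂ v * D p w) :
    ∀ i : Fin n,
      GaudinH D α z i = - DynG D (fun a => -z a + 1) α i :=
  stmt18_general k n z α hα D hD1 hDer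
end

section
/- Fix l = (l₁,…,l_k) ∈ ℤ_{≥0}^k and m = (m₁,…,mₙ) ∈ ℤ_{≥0}^n with Σl_a = Σm_i, and let ℙ_{kn}[l,m] be the span of monomials in the ξ_{ai} with column degrees m and row degrees l. If for some a ∈ {0,…,k−1} the quantity l̄_a = Σ_{b>a} ( l_b − #{i : m_i ≥ b} ) is negative, then ℙ_{kn}[l,m] = 0. -/
/-!
If a monomial with row degrees `l` and column degrees `m` exists, its support `S` certifies
`l̄_a ≥ 0`: a column with `c` entries has at most `a` of them in the rows below `a`, so at least
`c - a ≥ #{b ≥ a : b < c}` of them in the rows `b ≥ a`. Summing over the columns gives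
`∑_{b ≥ a} #{i : m_i > b} ≤ ∑_{b ≥ a} l_b`. Hence for negative `l̄_a` the spanning set of
`ℙ_{kn}[l,m]` is empty.
-/

/-- The monomial `∏_{(a,i) ∈ S} ξ_{ai}` in the exterior algebra `ℙ_{kn}` on generators
`ξ_{ai}`, `a = 1,…,k`, `i = 1,…,n` (product taken in the canonical order of `S`). -/
noncomputable def monom (k n : ℕ) (S : Finset (Fin k × Fin n)) :
    ExteriorAlgebra ℂ (Fin k × Fin n → ℂ) :=
  (S.toList.map fun p => ExteriorAlgebra.ι ℂ (Pi.single p (1 : ℂ))).prod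

/-- The weight subspace `ℙ_{kn}[l,m]`: span of the monomials in the `ξ_{ai}` with column
degrees `m` and row degrees `l`. -/
noncomputable def weightSpace (k n : ℕ) (l : Fin k → ℕ) (m : Fin n → ℕ) :
    Submodule ℂ (ExteriorAlgebra ℂ (Fin k × Fin n → ℂ)) :=
  Submodule.span ℂ {x | ∃ S : Finset (Fin k × Fin n),
    (∀ a, (S.filter fun p => p.1 = a).card = l a) ∧
    (∀ i, (S.filter fun p => p.2 = i).card = m i) ∧
    x = monom k n S}

open Finset

variable {k n : ℕ}

theorem card_filter_le_and_lt_le_sub (a₀ : Fin k) (c : ℕ) :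
    #{b : Fin k | a₀ ≤ b ∧ (b : ℕ) + 1 ≤ c} ≤ c - a₀ :=
  calc #{b : Fin k | a₀ ≤ b ∧ (b : ℕ) + 1 ≤ c} ≤ #(Ico (a₀ : ℕ) c) := by
        refine card_le_card_of_injOn Fin.val (fun b hb => ?_) Fin.val_injective.injOn
        simp only [coe_filter, mem_univ, true_and, Set.mem_ofPred_eq, Fin.le_def] at hb
        simp only [coe_Ico, Set.mem_Ico]
        omega
    _ = c - a₀ := Nat.card_Ico _ _

theorem card_filter_le_and_lt_card_le_card_filter_le (T : Finset (Fin k)) (a₀ : Fin k) :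
    #{b : Fin k | a₀ ≤ b ∧ (b : ℕ) + 1 ≤ #T} ≤ #{b ∈ T | a₀ ≤ b} := by
  have hbelow : #{b ∈ T | ¬a₀ ≤ b} ≤ a₀ :=
    calc _ ≤ #(Iio a₀) := card_le_card fun b hb => by simp_all
      _ = a₀ := Fin.card_Iio a₀
  have hsplit := card_filter_add_card_filter_not (s := T) (a₀ ≤ ·)
  have := card_filter_le_and_lt_le_sub a₀ #T
  omega

def column (S : Finset (Fin k × Fin n)) (i : Fin n) : Finset (Fin k) :=
  {p ∈ S | p.2 = i}.image Prod.fst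

theorem card_filter_column (S : Finset (Fin k × Fin n)) (i : Fin n) (P : Fin k → Prop)
    [DecidablePred P] : #{b ∈ column S i | P b} = #{p ∈ S | p.2 = i ∧ P p.1} := by
  rw [column, filter_image, filter_filter, card_image_of_injOn]
  intro p hp q hq hpq
  simp only [coe_filter] at hp hq
  exact Prod.ext hpq (hp.2.1.trans hq.2.1.symm)

theorem card_column (S : Finset (Fin k × Fin n)) (i : Fin n) :
    #(column S i) = #{p ∈ S | p.2 = i} := by
  simpa using card_filter_column S i fun _ => True

theorem card_filter_le_fst_eq_sum_card_filter_fst_eq (S : Finset (Fin k × Fin n))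
    (a₀ : Fin k) :
    #{p ∈ S | a₀ ≤ p.1} = ∑ b ∈ univ.filter (a₀ ≤ ·), #{p ∈ S | p.1 = b} := by
  rw [card_eq_sum_card_fiberwise (f := Prod.fst) (t := univ.filter (a₀ ≤ ·))
    fun p hp => by simp_all]
  refine sum_congr rfl fun b hb => ?_
  rw [filter_filter]
  refine congrArg card (filter_congr fun p _ => ⟨And.right, fun h => ⟨?_, h⟩⟩)
  simpa [h] using hb

theorem sum_card_lt_card_column_le_sum_card_row (S : Finset (Fin k × Fin n))
    (a₀ : Fin k) :
    ∑ b ∈ univ.filter (a₀ ≤ ·), #{i | (b : ℕ) + 1 ≤ #{p ∈ S | p.2 = i}} ≤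
      ∑ b ∈ univ.filter (a₀ ≤ ·), #{p ∈ S | p.1 = b} :=
  calc _ = ∑ i, #{b : Fin k | a₀ ≤ b ∧ (b : ℕ) + 1 ≤ #(column S i)} := by
        simp only [card_filter, card_column]
        rw [sum_comm]
        simp only [sum_filter, ite_and]
    _ ≤ ∑ i, #{b ∈ column S i | a₀ ≤ b} :=
        sum_le_sum fun i _ => card_filter_le_and_lt_card_le_card_filter_le _ a₀
    _ = #{p ∈ S | a₀ ≤ p.1} := by
        rw [card_eq_sum_card_fiberwise (f := Prod.snd) (t := univ)
          fun _ _ => mem_coe.2 (mem_univ _)]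
        simp only [card_filter_column, filter_filter, and_comm]
    _ = _ := card_filter_le_fst_eq_sum_card_filter_fst_eq S a₀

theorem stmt19_general (k n : ℕ) (l : Fin k → ℕ) (m : Fin n → ℕ)
    (a₀ : Fin k)
    (hneg : (∑ b ∈ Finset.univ.filter fun b : Fin k => a₀ ≤ b,
        ((l b : ℤ) -
          ((Finset.univ.filter fun i : Fin n => (b : ℕ) + 1 ≤ m i).card : ℤ))) < 0) :
    weightSpace k n l m = ⊥ := by
  rw [weightSpace, Submodule.span_eq_bot]
  rintro _ ⟨S, hl, hm, rfl⟩
  have hle := sum_card_lt_card_column_le_sum_card_row S a₀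
  simp only [hl, hm] at hle
  rw [sum_sub_distrib, sub_neg] at hneg
  exact absurd hle (by exact_mod_cast hneg.not_ge)

/-- Fix `l ∈ ℤ_{≥0}^k` and `m ∈ ℤ_{≥0}^n` with `∑ l_a = ∑ m_i`.  If for
some `a ∈ {0,…,k−1}` the quantity `l̄_a = ∑_{b>a} ( l_b − #{i : m_i ≥ b} )` (with `b`
running over `{a+1,…,k}`, `1`-based) is negative, then `ℙ_{kn}[l,m] = 0`. -/
theorem stmt19 (k n : ℕ) (l : Fin k → ℕ) (m : Fin n → ℕ)
    (hsum : ∑ a, l a = ∑ i, m i) (a₀ : Fin k)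
    (hneg : (∑ b ∈ Finset.univ.filter fun b : Fin k => a₀ ≤ b,
        ((l b : ℤ) -
          ((Finset.univ.filter fun i : Fin n => (b : ℕ) + 1 ≤ m i).card : ℤ))) < 0) :
    weightSpace k n l m = ⊥ :=
  stmt19_general k n l m a₀ hneg
end
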